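/- arXiv:1307.1288 — 2 statements merged into one kernel-verified Lean document; each statement's English description precedes it below -/
import Mathlib

section
/- Let V : [0,∞) → ℝ be a right-continuous function with left limits, of finite variation on every compact interval. Let f : ℝ → ℝ be of class C¹. Then for every t > 0, f(V(t)) − f(V(0)) = ∫_ℝ f'(x) ℓ^x(t) dx + Σ_{0<s≤t} ( f(V(s)) − f(V(s−)) ), where x ↦ ℓ^x(t) is defined for Lebesgue-almost every x and the sum is absolutely convergent. -/
/-!
Write `netCrossing u v x = 𝟙[x < v] - 𝟙[x < u]` for the signed crossing of the level `x` by a jump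
from `u` to `v`. For almost every `x`, the level `x` is hit at finitely many times in `[0, t]`
(a Banach indicatrix argument), is crossed by finitely many jumps (their total size is bounded by
the variation), and differs from `V 0`, `V t` and both ends of every jump (countably many values).
For such `x`, an intermediate value theorem for càdlàg functions shows that between consecutive
exceptional times `V` stays on one side of `x`, so `netCrossing (V 0) (V t) x` telescopes into
`ℓ^x(t)` plus the crossings by jumps. Finally `∫ f' · netCrossing u v = f v - f u`, and the sum
over jumps may be exchanged with the integral since the total jump size is finite.
-/

open MeasureTheory Set Filter
open scoped ENNReal NNReal

noncomputable section

/-- `V` increases through the level `x` at time `t`: `t > 0`, `V t = x`, `V` is continuous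
at `t` (within the domain `[0,∞)`), and `V s - V t` has the same sign as `s - t` for all
`s ≥ 0` in some neighborhood of `t`. -/
def IncreasesThrough (V : ℝ → ℝ) (x t : ℝ) : Prop :=
  0 < t ∧ V t = x ∧ ContinuousWithinAt V (Set.Ici 0) t ∧
    ∃ ε > 0, ∀ s ∈ Set.Ici (0 : ℝ), |s - t| < ε →
      ((s < t → V s < V t) ∧ (t < s → V t < V s))

/-- `V` decreases through the level `x` at time `t` iff `-V` increases through `-x` at `t`. -/
def DecreasesThrough (V : ℝ → ℝ) (x t : ℝ) : Prop :=
  IncreasesThrough (fun s => -V s) (-x) t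

/-- `(0,t] ∩ ℐ(x)`: the increasing passage times of `V` through `x` up to time `t`. -/
def incSet (V : ℝ → ℝ) (x t : ℝ) : Set ℝ :=
  {s | s ∈ Set.Ioc 0 t ∧ IncreasesThrough V x s}

/-- `(0,t] ∩ 𝒟(x)`: the decreasing passage times of `V` through `x` up to time `t`. -/
def decSet (V : ℝ → ℝ) (x t : ℝ) : Set ℝ :=
  {s | s ∈ Set.Ioc 0 t ∧ DecreasesThrough V x s}

/-- The signed local time `ℓ^x(t) = Card((0,t] ∩ ℐ(x)) − Card((0,t] ∩ 𝒟(x))`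
(meaningful when both sets are finite). -/
def signedLocalTime (V : ℝ → ℝ) (x t : ℝ) : ℤ :=
  ((incSet V x t).ncard : ℤ) - ((decSet V x t).ncard : ℤ)

/-- The absolute local time `λ^x(t) = Card((0,t] ∩ ℐ(x)) + Card((0,t] ∩ 𝒟(x))`
(meaningful when both sets are finite). -/
def absLocalTime (V : ℝ → ℝ) (x t : ℝ) : ℕ :=
  (incSet V x t).ncard + (decSet V x t).ncard

open Topology

section Jumps

def jumpTimes (V Vm : ℝ → ℝ) (a b : ℝ) : Set ℝ :=
  {s | s ∈ Ioc a b ∧ Vm s ≠ V s}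

variable {V Vm : ℝ → ℝ} {a b : ℝ}

theorem edist_leftLim_le_eVariationOn {c s : ℝ} (hcs : c < s)
    (hVm : Tendsto V (𝓝[<] s) (𝓝 (Vm s))) :
    edist (Vm s) (V s) ≤ eVariationOn V (Icc c s) := by
  refine le_of_tendsto (hVm.edist tendsto_const_nhds) ?_
  filter_upwards [Ioo_mem_nhdsLT hcs] with r hr
  exact eVariationOn.edist_le V ⟨hr.1.le, hr.2.le⟩ ⟨hcs.le, le_rfl⟩

theorem sum_edist_leftLim_le_eVariationOn
    (hVm : ∀ s ∈ Ioc a b, Tendsto V (𝓝[<] s) (𝓝 (Vm s)))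
    (F : Finset ℝ) (hF : ↑F ⊆ Ioc a b) :
    ∑ s ∈ F, edist (Vm s) (V s) ≤ eVariationOn V (Icc a b) := by
  classical
  induction F using Finset.induction_on_max generalizing b with
  | empty => simp
  | insert M F hlt ih =>
    have hM : M ∈ Ioc a b := hF (Finset.mem_insert_self M F)
    set c := (insert a F).max' (Finset.insert_nonempty a F)
    have hac : a ≤ c := Finset.le_max' _ a (Finset.mem_insert_self a F)
    have hcM : c < M := (Finset.max'_lt_iff _ _).2 fun s hs => by
      rcases Finset.mem_insert.1 hs with rfl | hs
      exacts [hM.1, hlt s hs]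
    have hFc : ↑F ⊆ Ioc a c := fun s hs =>
      ⟨(hF (Finset.mem_insert_of_mem hs)).1, Finset.le_max' _ s (Finset.mem_insert_of_mem hs)⟩
    calc ∑ s ∈ insert M F, edist (Vm s) (V s)
        = edist (Vm M) (V M) + ∑ s ∈ F, edist (Vm s) (V s) :=
          Finset.sum_insert fun h => (hlt M h).false
      _ ≤ eVariationOn V (Icc c M) + eVariationOn V (Icc a c) :=
          add_le_add (edist_leftLim_le_eVariationOn hcM (hVm M hM))
            (ih (fun s hs => hVm s ⟨hs.1, hs.2.trans (hcM.le.trans hM.2)⟩) hFc)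
      _ = eVariationOn V (Icc a M) := by
          simpa [add_comm] using eVariationOn.Icc_add_Icc V hac hcM.le (mem_univ c)
      _ ≤ eVariationOn V (Icc a b) := eVariationOn.mono V (Icc_subset_Icc_right hM.2)

theorem tsum_edist_leftLim_le_eVariationOn
    (hVm : ∀ s ∈ Ioc a b, Tendsto V (𝓝[<] s) (𝓝 (Vm s))) {A : Set ℝ} (hA : A ⊆ Ioc a b) :
    ∑' s : A, edist (Vm s) (V s) ≤ eVariationOn V (Icc a b) := by
  rw [ENNReal.tsum_eq_iSup_sum]
  refine iSup_le fun F => ?_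
  calc ∑ s ∈ F, edist (Vm s) (V s)
      = ∑ s ∈ F.map (Function.Embedding.subtype _), edist (Vm s) (V s) := by simp
    _ ≤ eVariationOn V (Icc a b) := sum_edist_leftLim_le_eVariationOn hVm _ fun s hs => by
        obtain ⟨s, -, rfl⟩ := Finset.mem_map.1 hs
        exact hA s.2

theorem summable_abs_sub_leftLim (hV : BoundedVariationOn V (Icc a b))
    (hVm : ∀ s ∈ Ioc a b, Tendsto V (𝓝[<] s) (𝓝 (Vm s))) :
    Summable fun s : Ioc a b => |V s - Vm s| := by
  refine (ENNReal.summable_toReal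
    (ne_top_of_le_ne_top hV (tsum_edist_leftLim_le_eVariationOn hVm subset_rfl))).congr
    fun s => ?_
  rw [← dist_edist, Real.dist_eq, abs_sub_comm]

theorem tsum_edist_jumpTimes_ne_top (hV : BoundedVariationOn V (Icc a b))
    (hVm : ∀ s ∈ Ioc a b, Tendsto V (𝓝[<] s) (𝓝 (Vm s))) :
    ∑' s : jumpTimes V Vm a b, edist (Vm s) (V s) ≠ ⊤ :=
  ne_top_of_le_ne_top hV (tsum_edist_leftLim_le_eVariationOn hVm fun _ hs => hs.1)

theorem countable_jumpTimes (hV : BoundedVariationOn V (Icc a b))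
    (hVm : ∀ s ∈ Ioc a b, Tendsto V (𝓝[<] s) (𝓝 (Vm s))) :
    (jumpTimes V Vm a b).Countable := by
  have hsupp := Summable.countable_support_ennreal
    (ne_top_of_le_ne_top hV (tsum_edist_leftLim_le_eVariationOn hVm subset_rfl))
  refine (hsupp.image Subtype.val).mono ?_
  rintro s ⟨hs, hne⟩
  refine ⟨⟨s, hs⟩, ?_, rfl⟩
  simpa [Function.mem_support, edist_eq_zero] using hne

theorem apply_mem_Icc_of_boundedVariationOn (hV : BoundedVariationOn V (Icc a b)) {s : ℝ}
    (hs : s ∈ Icc a b) :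
    V s ∈ Icc (V a - (eVariationOn V (Icc a b)).toReal)
      (V a + (eVariationOn V (Icc a b)).toReal) := by
  rw [← Real.closedBall_eq_Icc]
  exact hV.dist_le hs ⟨le_rfl, hs.1.trans hs.2⟩

theorem leftLim_mem_Icc_of_boundedVariationOn (hV : BoundedVariationOn V (Icc a b)) {s : ℝ}
    (hs : s ∈ Ioc a b) (hVm : Tendsto V (𝓝[<] s) (𝓝 (Vm s))) :
    Vm s ∈ Icc (V a - (eVariationOn V (Icc a b)).toReal)
      (V a + (eVariationOn V (Icc a b)).toReal) := by
  rw [← Real.closedBall_eq_Icc]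
  refine Metric.isClosed_closedBall.mem_of_tendsto hVm ?_
  filter_upwards [Ioo_mem_nhdsLT hs.1] with r hr
  exact hV.dist_le ⟨hr.1.le, hr.2.le.trans hs.2⟩ ⟨le_rfl, hs.1.le.trans hs.2⟩

end Jumps

section NetCrossing

/-- The signed number of times a jump from `u` to `v` crosses the level `x`. -/
def netCrossing (u v x : ℝ) : ℝ :=
  (Iio v).indicator 1 x - (Iio u).indicator 1 x

theorem netCrossing_eq_ite (u v x : ℝ) :
    netCrossing u v x = (if x < v then 1 else 0) - (if x < u then 1 else 0) := by
  simp [netCrossing, indicator_apply]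

@[simp]
theorem netCrossing_self (u x : ℝ) : netCrossing u u x = 0 :=
  sub_self _

theorem netCrossing_add_netCrossing (u v w x : ℝ) :
    netCrossing u v x + netCrossing v w x = netCrossing u w x := by
  simp only [netCrossing]; ring

theorem netCrossing_ne_zero_iff {u v x : ℝ} :
    netCrossing u v x ≠ 0 ↔ u ≤ x ∧ x < v ∨ v ≤ x ∧ x < u := by
  rw [netCrossing_eq_ite]
  by_cases hv : x < v <;> by_cases hu : x < u <;> simp [hu, hv] <;> linarith

theorem netCrossing_eq_indicator_sub (u v : ℝ) :
    netCrossing u v = (Ico u v).indicator 1 - (Ico v u).indicator 1 := by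
  ext x
  simp only [netCrossing_eq_ite, Pi.sub_apply, indicator_apply, mem_Ico, Pi.one_apply]
  split_ifs <;> grind

theorem enorm_netCrossing (u v x : ℝ) :
    ‖netCrossing u v x‖ₑ = (Ico (min u v) (max u v)).indicator 1 x := by
  rcases le_total u v with h | h <;>
    simp [netCrossing_eq_indicator_sub, h, indicator_apply] <;> split_ifs <;> simp

theorem measurable_netCrossing (u v : ℝ) : Measurable (netCrossing u v) :=
  (measurable_one.indicator measurableSet_Iio).sub (measurable_one.indicator measurableSet_Iio)

theorem lintegral_enorm_netCrossing (u v : ℝ) :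
    ∫⁻ x, ‖netCrossing u v x‖ₑ = edist u v := by
  simp_rw [enorm_netCrossing]
  rw [lintegral_indicator_one measurableSet_Ico, Real.volume_Ico, max_sub_min_eq_abs',
    edist_dist, Real.dist_eq]

variable {φ : ℝ → ℝ}

theorem mul_netCrossing_eq_indicator_sub (u v : ℝ) :
    (fun x => φ x * netCrossing u v x) = (Ico u v).indicator φ - (Ico v u).indicator φ := by
  ext x
  simp only [netCrossing_eq_indicator_sub, Pi.sub_apply, indicator_apply, Pi.one_apply]
  split_ifs <;> simp

theorem integrable_mul_netCrossing (hφ : LocallyIntegrable φ) (u v : ℝ) :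
    Integrable fun x => φ x * netCrossing u v x := by
  have hIco : ∀ a b : ℝ, IntegrableOn φ (Ico a b) :=
    fun a b => (hφ.integrableOn_isCompact isCompact_Icc).mono_set Ico_subset_Icc_self
  rw [mul_netCrossing_eq_indicator_sub]
  exact ((hIco u v).integrable_indicator measurableSet_Ico).sub
    ((hIco v u).integrable_indicator measurableSet_Ico)

theorem integral_mul_netCrossing (hφ : LocallyIntegrable φ) (u v : ℝ) :
    ∫ x, φ x * netCrossing u v x = ∫ x in u..v, φ x := by
  have hIco : ∀ a b : ℝ, IntegrableOn φ (Ico a b) :=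
    fun a b => (hφ.integrableOn_isCompact isCompact_Icc).mono_set Ico_subset_Icc_self
  rw [mul_netCrossing_eq_indicator_sub,
    integral_sub' ((hIco u v).integrable_indicator measurableSet_Ico)
      ((hIco v u).integrable_indicator measurableSet_Ico),
    integral_indicator measurableSet_Ico, integral_indicator measurableSet_Ico,
    integral_Ico_eq_integral_Ioc, integral_Ico_eq_integral_Ioc]
  rfl

theorem lintegral_enorm_mul_netCrossing_le {C u v : ℝ} (hC : ∀ y ∈ uIcc u v, ‖φ y‖ ≤ C) :
    ∫⁻ x, ‖φ x * netCrossing u v x‖ₑ ≤ ENNReal.ofReal C * edist u v := by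
  rw [← lintegral_enorm_netCrossing, ← lintegral_const_mul' _ _ ENNReal.ofReal_ne_top]
  refine lintegral_mono fun x => ?_
  rw [enorm_mul]
  by_cases hx : x ∈ Ico (min u v) (max u v)
  · gcongr
    rw [← ofReal_norm]
    exact ENNReal.ofReal_le_ofReal (hC x (Ico_subset_Icc_self hx))
  · simp [enorm_netCrossing, hx]

variable {ι : Type*} {u v : ι → ℝ}

theorem ae_finite_setOf_netCrossing_ne_zero [Countable ι] (hsum : ∑' i, edist (u i) (v i) ≠ ⊤) :
    ∀ᵐ x, {i | netCrossing (u i) (v i) x ≠ 0}.Finite := by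
  have hmeas : ∀ i, Measurable fun x => ‖netCrossing (u i) (v i) x‖ₑ :=
    fun i => (measurable_netCrossing _ _).enorm
  have hlint : ∫⁻ x, ∑' i, ‖netCrossing (u i) (v i) x‖ₑ ≠ ⊤ := by
    rwa [lintegral_tsum fun i => (hmeas i).aemeasurable,
      tsum_congr fun i => lintegral_enorm_netCrossing _ _]
  filter_upwards [ae_lt_top (Measurable.tsum hmeas) hlint] with x hx
  refine (ENNReal.finite_const_le_of_tsum_ne_top hx.ne one_ne_zero).subset fun i hi => ?_
  have h := enorm_netCrossing (u i) (v i) x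
  rw [indicator_apply] at h
  split_ifs at h
  · simp [h]
  · exact absurd (enorm_eq_zero.1 h) hi

variable {m M : ℝ}

theorem tsum_lintegral_enorm_mul_netCrossing_ne_top (hφ : Continuous φ) (hu : ∀ i, u i ∈ Icc m M)
    (hv : ∀ i, v i ∈ Icc m M) (hsum : ∑' i, edist (u i) (v i) ≠ ⊤) :
    ∑' i, ∫⁻ x, ‖φ x * netCrossing (u i) (v i) x‖ₑ ≠ ⊤ := by
  obtain ⟨C, hC⟩ := (isCompact_Icc (a := m) (b := M)).exists_bound_of_continuousOn hφ.continuousOn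
  refine ne_top_of_le_ne_top (ENNReal.mul_ne_top (ENNReal.ofReal_ne_top (r := C)) hsum) ?_
  rw [← ENNReal.tsum_mul_left]
  exact ENNReal.tsum_le_tsum fun i =>
    lintegral_enorm_mul_netCrossing_le fun y hy => hC y (uIcc_subset_Icc (hu i) (hv i) hy)

theorem integrable_mul_tsum_netCrossing [Countable ι] (hφ : Continuous φ) (hu : ∀ i, u i ∈ Icc m M)
    (hv : ∀ i, v i ∈ Icc m M) (hsum : ∑' i, edist (u i) (v i) ≠ ⊤) :
    Integrable fun x => φ x * ∑' i, netCrossing (u i) (v i) x := by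
  have hmeas : ∀ i, Measurable fun x => φ x * netCrossing (u i) (v i) x :=
    fun i => hφ.measurable.mul (measurable_netCrossing _ _)
  refine ⟨(hφ.measurable.mul
    (Measurable.tsum fun i => measurable_netCrossing _ _)).aestronglyMeasurable, ?_⟩
  calc ∫⁻ x, ‖φ x * ∑' i, netCrossing (u i) (v i) x‖ₑ
      ≤ ∫⁻ x, ∑' i, ‖φ x * netCrossing (u i) (v i) x‖ₑ := lintegral_mono fun x => by
        rw [← tsum_mul_left]; exact enorm_tsum_le_tsum_enorm
    _ = ∑' i, ∫⁻ x, ‖φ x * netCrossing (u i) (v i) x‖ₑ :=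
        lintegral_tsum fun i => (hmeas i).enorm.aemeasurable
    _ < ⊤ := (tsum_lintegral_enorm_mul_netCrossing_ne_top hφ hu hv hsum).lt_top

theorem integral_mul_tsum_netCrossing [Countable ι] (hφ : Continuous φ) (hu : ∀ i, u i ∈ Icc m M)
    (hv : ∀ i, v i ∈ Icc m M) (hsum : ∑' i, edist (u i) (v i) ≠ ⊤) :
    ∫ x, φ x * ∑' i, netCrossing (u i) (v i) x = ∑' i, ∫ x in u i..v i, φ x := by
  simp_rw [← tsum_mul_left]
  rw [integral_tsum (f := fun i x => φ x * netCrossing (u i) (v i) x)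
    (fun i => (hφ.measurable.mul (measurable_netCrossing _ _)).aestronglyMeasurable)
    (tsum_lintegral_enorm_mul_netCrossing_ne_top hφ hu hv hsum)]
  exact tsum_congr fun i => integral_mul_netCrossing hφ.locallyIntegrable _ _

end NetCrossing

section LevelSets

def uniformPartition (a b : ℝ) (n k : ℕ) : ℝ :=
  a + (b - a) * k / (n + 1)

def partitionIndex (a b : ℝ) (n : ℕ) (s : ℝ) : ℕ :=
  ⌊(s - a) * (n + 1) / (b - a)⌋₊

variable {V : ℝ → ℝ} {a b : ℝ}

theorem monotone_uniformPartition (hab : a ≤ b) (n : ℕ) : Monotone (uniformPartition a b n) :=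
  fun k l hkl => by
    unfold uniformPartition
    gcongr

theorem uniformPartition_mem_Icc (hab : a ≤ b) {n k : ℕ} (hk : k ≤ n + 1) :
    uniformPartition a b n k ∈ Icc a b := by
  have hk' : (k : ℝ) ≤ n + 1 := by exact_mod_cast hk
  unfold uniformPartition
  constructor
  · have : 0 ≤ (b - a) * k / (n + 1) := by have := sub_nonneg.2 hab; positivity
    linarith
  · rw [← le_sub_iff_add_le', div_le_iff₀ (by positivity)]
    nlinarith

theorem partitionIndex_spec {s : ℝ} (hs : s ∈ Ico a b) (n : ℕ) :
    partitionIndex a b n s < n + 1 ∧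
      s ∈ Icc (uniformPartition a b n (partitionIndex a b n s))
        (uniformPartition a b n (partitionIndex a b n s + 1)) := by
  have hab : 0 < b - a := by linarith [hs.1, hs.2]
  have hy : 0 ≤ (s - a) * (n + 1) / (b - a) := by have := sub_nonneg.2 hs.1; positivity
  have hle := Nat.floor_le hy
  have hlt := Nat.lt_floor_add_one ((s - a) * (n + 1) / (b - a))
  unfold partitionIndex uniformPartition
  rw [le_div_iff₀ hab] at hle
  rw [div_lt_iff₀ hab] at hlt
  refine ⟨?_, ?_, ?_⟩
  · have : ((s - a) * (n + 1) / (b - a)) < n + 1 := by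
      rw [div_lt_iff₀ hab]; nlinarith [hs.2]
    exact_mod_cast (Nat.floor_le hy).trans_lt this
  · rw [← le_sub_iff_add_le', div_le_iff₀ (by positivity)]
    nlinarith
  · push_cast
    rw [← sub_le_iff_le_add', le_div_iff₀ (by positivity)]
    nlinarith

theorem abs_sub_lt_of_partitionIndex_eq (hab : a < b) {n : ℕ} {s s' : ℝ} (hs : a ≤ s) (hs' : a ≤ s')
    (h : partitionIndex a b n s = partitionIndex a b n s') :
    |s - s'| * (n + 1) / (b - a) < 1 := by
  have hba : 0 < b - a := sub_pos.2 hab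
  have hy : ∀ r, a ≤ r → 0 ≤ (r - a) * (n + 1) / (b - a) := fun r hr => by
    have := sub_nonneg.2 hr; positivity
  have h₁ := Nat.floor_le (hy s hs)
  have h₂ := Nat.lt_floor_add_one ((s' - a) * (n + 1) / (b - a))
  have h₃ := Nat.floor_le (hy s' hs')
  have h₄ := Nat.lt_floor_add_one ((s - a) * (n + 1) / (b - a))
  unfold partitionIndex at h
  rw [h] at h₁ h₄
  have : |s - s'| * (n + 1) / (b - a) =
      |(s - a) * (n + 1) / (b - a) - (s' - a) * (n + 1) / (b - a)| := by
    rw [← sub_div, ← sub_mul, abs_div, abs_mul, abs_of_pos hba,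
      abs_of_pos (by positivity : (0 : ℝ) < n + 1)]
    ring_nf
  rw [this, abs_sub_lt_iff]
  constructor <;> linarith

theorem eventually_injOn_partitionIndex (hab : a < b) (F : Finset ℝ) (hF : ∀ s ∈ F, a ≤ s) :
    ∀ᶠ n in atTop, InjOn (partitionIndex a b n) F := by
  have hpair : ∀ p ∈ F ×ˢ F, ∀ᶠ n in atTop,
      partitionIndex a b n p.1 = partitionIndex a b n p.2 → p.1 = p.2 := by
    rintro ⟨s, s'⟩ hp
    rw [Finset.mem_product] at hp
    rcases eq_or_ne s s' with h | h
    · exact Eventually.of_forall fun _ _ => h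
    have hlim : Tendsto (fun n : ℕ => |s - s'| * (n + 1) / (b - a)) atTop atTop :=
      ((tendsto_atTop_add_const_right _ 1 tendsto_natCast_atTop_atTop).const_mul_atTop
        (abs_pos.2 (sub_ne_zero.2 h))).atTop_div_const (sub_pos.2 hab)
    filter_upwards [hlim.eventually_ge_atTop 1] with n hn heq
    exact absurd (abs_sub_lt_of_partitionIndex_eq hab (hF s hp.1) (hF s' hp.2) heq) hn.not_gt
  filter_upwards [(eventually_all_finset _).2 hpair] with n hn s hs s' hs' heq
  exact hn (s, s') (Finset.mem_product.2 ⟨hs, hs'⟩) heq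

/-- Counts the pieces `[p, q]` of the `n`-th uniform partition of `[a, b]` such that `x` lies within
the variation of `V` on `[p, q]` from `V p`; every `s ∈ [p, q]` has `V s` within that distance. -/
def partitionCover (V : ℝ → ℝ) (a b : ℝ) (n : ℕ) (x : ℝ) : ℝ≥0∞ :=
  ∑ k ∈ Finset.range (n + 1), (Metric.closedBall (V (uniformPartition a b n k))
    (eVariationOn V (Icc (uniformPartition a b n k)
      (uniformPartition a b n (k + 1)))).toReal).indicator 1 x

theorem measurable_partitionCover (n : ℕ) : Measurable (partitionCover V a b n) :=
  Finset.measurable_sum _ fun _ _ =>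
    measurable_one.indicator Metric.isClosed_closedBall.measurableSet

theorem lintegral_partitionCover (hV : BoundedVariationOn V (Icc a b)) (hab : a ≤ b) (n : ℕ) :
    ∫⁻ x, partitionCover V a b n x = 2 * eVariationOn V (Icc a b) := by
  have hfin : ∀ k ∈ Finset.range (n + 1), eVariationOn V (Icc (uniformPartition a b n k)
      (uniformPartition a b n (k + 1))) ≠ ⊤ := fun k hk =>
    ne_top_of_le_ne_top hV (eVariationOn.mono V (Icc_subset_Icc
      (uniformPartition_mem_Icc hab (by simp at hk; omega)).1
      (uniformPartition_mem_Icc hab (by simp at hk; omega)).2))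
  unfold partitionCover
  rw [lintegral_finsetSum _ fun _ _ =>
    measurable_one.indicator Metric.isClosed_closedBall.measurableSet]
  simp_rw [lintegral_indicator_one Metric.isClosed_closedBall.measurableSet, Real.volume_closedBall]
  rw [Finset.sum_congr rfl fun k hk => by
    rw [ENNReal.ofReal_mul zero_le_two, ENNReal.ofReal_toReal (hfin k hk), ENNReal.ofReal_ofNat],
    ← Finset.mul_sum, eVariationOn.sum' V (monotone_uniformPartition hab n)]
  simp only [uniformPartition, CharP.cast_eq_zero, mul_zero, zero_div, add_zero, Nat.cast_add,
    Nat.cast_one, mul_div_cancel_right₀ _ (by positivity : (n : ℝ) + 1 ≠ 0), add_sub_cancel]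

theorem card_le_partitionCover (hV : BoundedVariationOn V (Icc a b)) {n : ℕ} {x : ℝ} {F : Finset ℝ}
    (hF : ∀ s ∈ F, s ∈ Ico a b ∧ V s = x) (hinj : InjOn (partitionIndex a b n) F) :
    (F.card : ℝ≥0∞) ≤ partitionCover V a b n x := by
  have hsub : F.image (partitionIndex a b n) ⊆ Finset.range (n + 1) := fun k hk => by
    obtain ⟨s, hs, rfl⟩ := Finset.mem_image.1 hk
    exact Finset.mem_range.2 (partitionIndex_spec (hF s hs).1 n).1
  calc (F.card : ℝ≥0∞) = ∑ k ∈ F.image (partitionIndex a b n), 1 := by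
        simp [Finset.card_image_of_injOn hinj]
    _ ≤ partitionCover V a b n x := by
        refine le_trans (le_of_eq (Finset.sum_congr rfl fun k hk => ?_))
          (Finset.sum_le_sum_of_subset hsub)
        obtain ⟨s, hs, rfl⟩ := Finset.mem_image.1 hk
        obtain ⟨⟨has, hsb⟩, rfl⟩ := hF s hs
        obtain ⟨hk, hsk⟩ := partitionIndex_spec ⟨has, hsb⟩ n
        have hab : a ≤ b := has.trans hsb.le
        rw [indicator_of_mem, Pi.one_apply]
        refine (hV.mono (Icc_subset_Icc (uniformPartition_mem_Icc hab hk.le).1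
          (uniformPartition_mem_Icc hab hk).2)).dist_le hsk ⟨le_rfl, ?_⟩
        exact monotone_uniformPartition hab n (Nat.le_succ _)

theorem ae_finite_setOf_eq_of_boundedVariationOn (hV : BoundedVariationOn V (Icc a b)) :
    ∀ᵐ x, {s | s ∈ Icc a b ∧ V s = x}.Finite := by
  rcases le_or_gt b a with hba | hab
  · exact Eventually.of_forall fun x =>
      ((subsingleton_Icc_of_ge hba).anti fun s hs => hs.1).finite
  have hlim : ∫⁻ x, liminf (fun n => partitionCover V a b n x) atTop ≠ ⊤ := by
    refine ne_top_of_le_ne_top (ENNReal.mul_ne_top (ENNReal.ofNat_ne_top (n := 2)) hV)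
      ((lintegral_liminf_le measurable_partitionCover).trans ?_)
    simp [lintegral_partitionCover hV hab.le]
  filter_upwards [ae_lt_top (Measurable.liminf measurable_partitionCover) hlim] with x hx
  -- By Fatou, the covering counts stay bounded along a subsequence, while a level set with
  -- `m` points in `[a, b)` is eventually counted at least `m` times.
  have hIco : {s | s ∈ Ico a b ∧ V s = x}.Finite := by
    by_contra hinf
    obtain ⟨m, hm⟩ := ENNReal.exists_nat_gt hx.ne
    obtain ⟨F, hF, rfl⟩ := Set.Infinite.exists_subset_card_eq hinf m
    refine hm.not_ge (le_liminf_of_le (by isBoundedDefault) ?_)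
    filter_upwards [eventually_injOn_partitionIndex hab F fun s hs => (hF hs).1.1] with n hn
    exact card_le_partitionCover hV (fun s hs => hF hs) hn
  refine (hIco.insert b).subset fun s hs => ?_
  rcases eq_or_lt_of_le hs.1.2 with h | h
  exacts [Or.inl h, Or.inr ⟨⟨hs.1.1, h⟩, hs.2⟩]

end LevelSets

section Crossings

structure IsCadlag (V Vm : ℝ → ℝ) : Prop where
  continuousWithinAt_Ici : ∀ s ∈ Ici (0 : ℝ), ContinuousWithinAt V (Ici s) s
  tendsto_leftLim : ∀ s ∈ Ioi (0 : ℝ), Tendsto V (𝓝[<] s) (𝓝 (Vm s))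

def crossingTimes (V Vm : ℝ → ℝ) (x : ℝ) : Set ℝ :=
  {s | V s = x ∨ netCrossing (Vm s) (V s) x ≠ 0}

open Classical in
def crossingContribution (V Vm : ℝ → ℝ) (x s : ℝ) : ℝ :=
  (if IncreasesThrough V x s then 1 else 0) - (if DecreasesThrough V x s then 1 else 0) +
    netCrossing (Vm s) (V s) x

variable {V Vm : ℝ → ℝ} {x a b s : ℝ}

theorem leftLim_ne_of_ne (hjump : Vm s ≠ V s → V s ≠ x ∧ Vm s ≠ x) (hVs : V s ≠ x) :
    Vm s ≠ x := by
  by_cases hj : Vm s = V s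
  exacts [hj ▸ hVs, (hjump hj).2]

theorem mem_crossingTimes_of_between (hjump : Vm s ≠ V s → V s ≠ x ∧ Vm s ≠ x)
    (h : V s ≤ x ∧ x ≤ Vm s ∨ Vm s ≤ x ∧ x ≤ V s) : s ∈ crossingTimes V Vm x := by
  by_cases hVs : V s = x
  · exact Or.inl hVs
  have hVms := leftLim_ne_of_ne hjump hVs
  refine Or.inr (netCrossing_ne_zero_iff.2 ?_)
  rcases h with ⟨h₁, h₂⟩ | ⟨h₁, h₂⟩
  exacts [Or.inr ⟨h₁, h₂.lt_of_ne' hVms⟩, Or.inl ⟨h₁, h₂.lt_of_ne' hVs⟩]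

theorem exists_Ioc_notMem_of_finite {T : Set ℝ} (hT : T.Finite) (hsb : s < b) :
    ∃ m ∈ Ioc s b, ∀ r ∈ Ioc s m, r ∉ T := by
  have hev : ∀ᶠ r in 𝓝[>] s, r ∉ T := by
    filter_upwards [mem_nhdsWithin_of_mem_nhds ((hT.sdiff (t := {s})).isClosed.isOpen_compl.mem_nhds
      fun h => h.2 rfl), self_mem_nhdsWithin] with r hr hrs hrT
    exact hr ⟨hrT, (ne_of_gt hrs : r ≠ s)⟩
  obtain ⟨u, hu, hsub⟩ := mem_nhdsGT_iff_exists_Ioc_subset.1 hev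
  exact ⟨min u b, ⟨lt_min hu hsb, min_le_right _ _⟩,
    fun r hr => hsub ⟨hr.1, hr.2.trans (min_le_left _ _)⟩⟩

theorem increasesThrough_iff {p q : Prop} (ha : 0 ≤ a) (has : a < s) (hsb : s < b)
    (hVs : V s = x) (hcont : ContinuousWithinAt V (Ici 0) s)
    (hleft : ∀ r ∈ Ioo a s, V r ≠ x ∧ (x < V r ↔ p))
    (hright : ∀ r ∈ Ioo s b, V r ≠ x ∧ (x < V r ↔ q)) :
    IncreasesThrough V x s ↔ ¬p ∧ q := by
  constructor
  · rintro ⟨-, -, -, ε, hε, h⟩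
    obtain ⟨r, hr₁, hr₂⟩ := exists_between (max_lt has (sub_lt_self s hε))
    obtain ⟨r', hr₁', hr₂'⟩ := exists_between (lt_min hsb (lt_add_of_pos_right s hε))
    rw [max_lt_iff] at hr₁
    rw [lt_min_iff] at hr₂'
    have hl := (h r (ha.trans hr₁.1.le) (by rw [abs_sub_lt_iff]; constructor <;> linarith)).1 hr₂
    have hr :=
      (h r' (mem_Ici.2 (by linarith)) (by rw [abs_sub_lt_iff]; constructor <;> linarith)).2 hr₁'
    rw [hVs] at hl hr
    exact ⟨fun hp => hl.not_gt ((hleft r ⟨hr₁.1, hr₂⟩).2.2 hp), (hright r' ⟨hr₁', hr₂'.1⟩).2.1 hr⟩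
  · rintro ⟨hp, hq⟩
    refine ⟨ha.trans_lt has, hVs, hcont, min (s - a) (b - s),
      lt_min (sub_pos.2 has) (sub_pos.2 hsb), fun r _ habs => ?_⟩
    rw [abs_sub_lt_iff, lt_min_iff, lt_min_iff] at habs
    rw [hVs]
    constructor
    · intro hrs
      obtain ⟨hne, hiff⟩ := hleft r ⟨by linarith, hrs⟩
      exact (not_lt.1 (mt hiff.1 hp)).lt_of_ne hne
    · intro hsr
      exact (hright r ⟨hsr, by linarith⟩).2.2 hq

theorem decreasesThrough_iff {p q : Prop} (ha : 0 ≤ a) (has : a < s) (hsb : s < b)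
    (hVs : V s = x) (hcont : ContinuousWithinAt V (Ici 0) s)
    (hleft : ∀ r ∈ Ioo a s, V r ≠ x ∧ (x < V r ↔ p))
    (hright : ∀ r ∈ Ioo s b, V r ≠ x ∧ (x < V r ↔ q)) :
    DecreasesThrough V x s ↔ p ∧ ¬q := by
  have hneg : ∀ {r : ℝ} {p : Prop}, V r ≠ x ∧ (x < V r ↔ p) → -V r ≠ -x ∧ (-x < -V r ↔ ¬p) :=
    fun ⟨hne, hiff⟩ => ⟨fun h => hne (neg_inj.1 h), by
      rw [neg_lt_neg_iff, ← hiff, not_lt]; exact ⟨le_of_lt, fun h => h.lt_of_ne hne⟩⟩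
  have := increasesThrough_iff (V := fun r => -V r) (x := -x) ha has hsb (by rw [hVs])
    hcont.neg (fun r hr => hneg (hleft r hr)) (fun r hr => hneg (hright r hr))
  rwa [not_not] at this

namespace IsCadlag

theorem neg (hV : IsCadlag V Vm) : IsCadlag (fun s => -V s) (fun s => -Vm s) :=
  ⟨fun s hs => (hV.continuousWithinAt_Ici s hs).neg, fun s hs => (hV.tendsto_leftLim s hs).neg⟩

theorem continuousWithinAt_of_leftLim_eq (hV : IsCadlag V Vm) (hs : 0 < s) (h : Vm s = V s) :
    ContinuousWithinAt V (Ici 0) s := by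
  have hleft : ContinuousWithinAt V (Iio s) s := by
    rw [ContinuousWithinAt, ← h]
    exact hV.tendsto_leftLim s hs
  exact (continuousAt_iff_continuous_left_right.2
    ⟨continuousWithinAt_Iio_iff_Iic.1 hleft, hV.continuousWithinAt_Ici s hs.le⟩).continuousWithinAt

theorem exists_le_le_of_lt_of_lt (hV : IsCadlag V Vm) (ha : 0 ≤ a) (hab : a ≤ b)
    (hxa : x < V a) (hxb : V b < x) : ∃ s ∈ Ioc a b, V s ≤ x ∧ x ≤ Vm s := by
  set T := {r | r ∈ Icc a b ∧ V r < x}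
  have hbT : b ∈ T := ⟨right_mem_Icc.2 hab, hxb⟩
  have hbdd : BddBelow T := ⟨a, fun r hr => hr.1.1⟩
  have hau : a ≤ sInf T := le_csInf ⟨b, hbT⟩ fun r hr => hr.1.1
  have hub : sInf T ≤ b := csInf_le hbdd hbT
  -- `sInf T` is the first time `V` drops below `x`: right-continuity gives `V ≤ x` there,
  -- and `V ≥ x` before it forces `x ≤ Vm`.
  have hleft : ∀ r ∈ Ico a (sInf T), x ≤ V r := fun r hr =>
    not_lt.1 fun h => hr.2.not_ge (csInf_le hbdd ⟨⟨hr.1, hr.2.le.trans hub⟩, h⟩)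
  have hVu : V (sInf T) ≤ x := by
    by_contra! h
    obtain ⟨c, hc, hsub⟩ := mem_nhdsGE_iff_exists_Ico_subset.1
      (hV.continuousWithinAt_Ici _ (ha.trans hau) (Ioi_mem_nhds h))
    obtain ⟨r, hrT, hrc⟩ := exists_lt_of_csInf_lt ⟨b, hbT⟩ hc
    exact (hsub ⟨csInf_le hbdd hrT, hrc⟩ : x < V r).not_gt hrT.2
  have hua : a < sInf T := hau.lt_of_ne fun h => hxa.not_ge (h ▸ hVu)
  refine ⟨sInf T, ⟨hua, hub⟩, hVu, ge_of_tendsto (hV.tendsto_leftLim _ (ha.trans_lt hua)) ?_⟩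
  filter_upwards [Ioo_mem_nhdsLT hua] with r hr using hleft r ⟨hr.1.le, hr.2⟩

theorem exists_le_le_of_lt_of_lt' (hV : IsCadlag V Vm) (ha : 0 ≤ a) (hab : a ≤ b)
    (hxa : V a < x) (hxb : x < V b) : ∃ s ∈ Ioc a b, Vm s ≤ x ∧ x ≤ V s := by
  obtain ⟨s, hs, h₁, h₂⟩ :=
    hV.neg.exists_le_le_of_lt_of_lt ha hab (neg_lt_neg hxa) (neg_lt_neg hxb)
  exact ⟨s, hs, neg_le_neg_iff.1 h₂, neg_le_neg_iff.1 h₁⟩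

theorem lt_iff_lt_of_forall_notMem (hV : IsCadlag V Vm) (ha : 0 ≤ a) (hab : a ≤ b)
    (hjump : ∀ s ∈ Ioc a b, Vm s ≠ V s → V s ≠ x ∧ Vm s ≠ x)
    (hS : ∀ r ∈ Ioc a b, r ∉ crossingTimes V Vm x) (hVa : V a ≠ x) :
    x < V b ↔ x < V a := by
  rcases hab.eq_or_lt with rfl | hlt
  · rfl
  have hVb : V b ≠ x := fun h => hS b ⟨hlt, le_rfl⟩ (Or.inl h)
  constructor
  · intro hxb
    by_contra hxa
    obtain ⟨s, hs, h⟩ :=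
      hV.exists_le_le_of_lt_of_lt' ha hab ((not_lt.1 hxa).lt_of_ne hVa) hxb
    exact hS s hs (mem_crossingTimes_of_between (hjump s hs) (Or.inr h))
  · intro hxa
    by_contra hxb
    obtain ⟨s, hs, h⟩ :=
      hV.exists_le_le_of_lt_of_lt ha hab hxa ((not_lt.1 hxb).lt_of_ne hVb)
    exact hS s hs (mem_crossingTimes_of_between (hjump s hs) (Or.inl h))

theorem leftLim_lt_iff (hV : IsCadlag V Vm) (ha : 0 ≤ a) (has : a < s)
    (hjump : ∀ r ∈ Ioo a s, Vm r ≠ V r → V r ≠ x ∧ Vm r ≠ x)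
    (hS : ∀ r ∈ Ioo a s, r ∉ crossingTimes V Vm x) (hVa : V a ≠ x) (hVms : Vm s ≠ x) :
    x < Vm s ↔ x < V a := by
  have hsign : ∀ᶠ r in 𝓝[<] s, (x < V r ↔ x < V a) := by
    filter_upwards [Ioo_mem_nhdsLT has] with r hr
    exact hV.lt_iff_lt_of_forall_notMem ha hr.1.le
      (fun q hq => hjump q ⟨hq.1, hq.2.trans_lt hr.2⟩)
      (fun q hq => hS q ⟨hq.1, hq.2.trans_lt hr.2⟩) hVa
  have hlim := hV.tendsto_leftLim s (ha.trans_lt has)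
  by_cases hxa : x < V a
  · simp only [hxa, iff_true]
    exact (ge_of_tendsto hlim (hsign.mono fun r hr => (hr.2 hxa).le)).lt_of_ne' hVms
  · simp only [hxa, iff_false, not_lt]
    exact le_of_tendsto hlim (hsign.mono fun r hr => not_lt.1 (mt hr.1 hxa))

theorem netCrossing_eq_crossingContribution (hV : IsCadlag V Vm) {m : ℝ} (ha : 0 ≤ a)
    (has : a < s) (hsm : s ≤ m) (hjump : ∀ r ∈ Ioc a m, Vm r ≠ V r → V r ≠ x ∧ Vm r ≠ x)
    (hS : ∀ r ∈ Ioc a m, r ∈ crossingTimes V Vm x → r = s) (hVa : V a ≠ x) (hVm : V m ≠ x) :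
    netCrossing (V a) (V m) x = crossingContribution V Vm x s := by
  have hfree : ∀ r ∈ Ioc a m, r ≠ s → r ∉ crossingTimes V Vm x :=
    fun r hr hne hmem => hne (hS r hr hmem)
  have hleft : ∀ r ∈ Ioo a s, V r ≠ x ∧ (x < V r ↔ x < V a) := fun r hr =>
    ⟨fun h => hfree r ⟨hr.1, hr.2.le.trans hsm⟩ hr.2.ne (Or.inl h),
      hV.lt_iff_lt_of_forall_notMem ha hr.1.le
        (fun q hq => hjump q ⟨hq.1, hq.2.trans (hr.2.le.trans hsm)⟩)
        (fun q hq => hfree q ⟨hq.1, hq.2.trans (hr.2.le.trans hsm)⟩ (hq.2.trans_lt hr.2).ne) hVa⟩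
  have hright : ∀ r ∈ Icc s m, V r ≠ x → (x < V m ↔ x < V r) := fun r hr hVr =>
    hV.lt_iff_lt_of_forall_notMem (ha.trans (has.le.trans hr.1)) hr.2
      (fun q hq => hjump q ⟨has.trans (hr.1.trans_lt hq.1), hq.2⟩)
      (fun q hq => hfree q ⟨has.trans (hr.1.trans_lt hq.1), hq.2⟩ (hr.1.trans_lt hq.1).ne') hVr
  by_cases hVs : V s = x
  · -- a level crossing time: jumps avoid `x`, so `V` is continuous at `s`
    have hjs : Vm s = V s := by_contra fun hj => (hjump s ⟨has, hsm⟩ hj).1 hVs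
    have hsm' : s < m := hsm.lt_of_ne (by rintro rfl; exact hVm hVs)
    have hcont := hV.continuousWithinAt_of_leftLim_eq (ha.trans_lt has) hjs
    have hright' : ∀ r ∈ Ioo s m, V r ≠ x ∧ (x < V r ↔ x < V m) := fun r hr =>
      have hVr : V r ≠ x := fun h => hfree r ⟨has.trans hr.1, hr.2.le⟩ hr.1.ne' (Or.inl h)
      ⟨hVr, (hright r ⟨hr.1.le, hr.2.le⟩ hVr).symm⟩
    rw [crossingContribution, increasesThrough_iff ha has hsm' hVs hcont hleft hright',
      decreasesThrough_iff ha has hsm' hVs hcont hleft hright', hjs, netCrossing_self,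
      netCrossing_eq_ite]
    by_cases hp : x < V a <;> by_cases hq : x < V m <;> simp [hp, hq]
  · -- a jump crossing time: `V` keeps its side of `x` on `(a, s)` and on `[s, m]`
    have hVms := leftLim_ne_of_ne (hjump s ⟨has, hsm⟩) hVs
    have has' : x < Vm s ↔ x < V a := hV.leftLim_lt_iff ha has
      (fun q hq => hjump q ⟨hq.1, hq.2.le.trans hsm⟩)
      (fun q hq => hfree q ⟨hq.1, hq.2.le.trans hsm⟩ hq.2.ne) hVa hVms
    have hinc : ¬IncreasesThrough V x s := fun h => hVs h.2.1
    have hdec : ¬DecreasesThrough V x s := fun h => hVs (neg_inj.1 h.2.1)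
    simp only [crossingContribution, if_neg hinc, if_neg hdec, netCrossing_eq_ite,
      hright s ⟨le_rfl, hsm⟩ hVs, ← has']
    ring

theorem netCrossing_eq_finsum (hV : IsCadlag V Vm) (ha : 0 ≤ a) (hab : a ≤ b)
    (hjump : ∀ s ∈ Ioc a b, Vm s ≠ V s → V s ≠ x ∧ Vm s ≠ x) (hVa : V a ≠ x) (hVb : V b ≠ x)
    (hfin : (crossingTimes V Vm x ∩ Ioc a b).Finite) :
    netCrossing (V a) (V b) x =
      ∑ᶠ s ∈ crossingTimes V Vm x ∩ Ioc a b, crossingContribution V Vm x s := by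
  induction hn : (crossingTimes V Vm x ∩ Ioc a b).ncard using Nat.strong_induction_on
    generalizing a with
  | _ n ih =>
  rcases (crossingTimes V Vm x ∩ Ioc a b).eq_empty_or_nonempty with hemp | hne
  · have hsign := hV.lt_iff_lt_of_forall_notMem ha hab hjump
      (fun r hr hmem => hemp.subset ⟨hmem, hr⟩) hVa
    simp only [hemp, finsum_mem_empty, netCrossing_eq_ite, hsign, sub_self]
  -- split `(a, b]` at a point `m` between the first crossing time `s` and the next one
  obtain ⟨s, ⟨hsS, hs⟩, hmin⟩ := exists_min_image _ id hfin hne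
  obtain ⟨m, ⟨hsm, hmb⟩, hfree, hVm⟩ : ∃ m ∈ Icc s b,
      (∀ r ∈ Ioc s m, r ∉ crossingTimes V Vm x ∩ Ioc a b) ∧ V m ≠ x := by
    rcases hs.2.eq_or_lt with rfl | hsb
    · exact ⟨s, ⟨le_rfl, le_rfl⟩, fun r hr => absurd hr.2 hr.1.not_ge, hVb⟩
    obtain ⟨m, hm, hfree⟩ := exists_Ioc_notMem_of_finite hfin hsb
    exact ⟨m, ⟨hm.1.le, hm.2⟩, hfree, fun h => hfree m ⟨hm.1, le_rfl⟩
      ⟨Or.inl h, hs.1.trans hm.1, hm.2⟩⟩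
  have hsplit : crossingTimes V Vm x ∩ Ioc a b = insert s (crossingTimes V Vm x ∩ Ioc m b) := by
    ext r
    refine ⟨fun hr => ?_, ?_⟩
    · rcases eq_or_ne r s with rfl | hrs
      · exact Or.inl rfl
      have hsr : s < r := (hmin r hr).lt_of_ne hrs.symm
      exact Or.inr ⟨hr.1, not_le.1 fun hrm => hfree r ⟨hsr, hrm⟩ hr, hr.2.2⟩
    · rintro (rfl | ⟨hrS, hmr, hrb⟩)
      exacts [⟨hsS, hs⟩, ⟨hrS, hs.1.trans_le (hsm.trans hmr.le), hrb⟩]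
  have hsnot : s ∉ crossingTimes V Vm x ∩ Ioc m b := fun h => h.2.1.not_ge hsm
  have hfin' : (crossingTimes V Vm x ∩ Ioc m b).Finite := hfin.subset (hsplit ▸ subset_insert _ _)
  have honly : ∀ r ∈ Ioc a m, r ∈ crossingTimes V Vm x → r = s := fun r hr hrS =>
    (hmin r ⟨hrS, hr.1, hr.2.trans hmb⟩).antisymm'
      (not_lt.1 fun hsr => hfree r ⟨hsr, hr.2⟩ ⟨hrS, hr.1, hr.2.trans hmb⟩)
  rw [hsplit, ncard_insert_of_notMem hsnot hfin'] at hn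
  rw [hsplit, finsum_mem_insert _ hsnot hfin',
    ← hV.netCrossing_eq_crossingContribution ha hs.1 hsm
      (fun r hr => hjump r ⟨hr.1, hr.2.trans hmb⟩) honly hVa hVm,
    ← ih _ (by omega) (ha.trans (hs.1.le.trans hsm)) hmb
      (fun r hr => hjump r ⟨hs.1.trans_le (hsm.trans hr.1.le), hr.2⟩) hVm hfin' rfl,
    netCrossing_add_netCrossing]

theorem signedLocalTime_eq (hV : IsCadlag V Vm) {t : ℝ} (ht : 0 ≤ t)
    (hjump : ∀ s ∈ Ioc 0 t, Vm s ≠ V s → V s ≠ x ∧ Vm s ≠ x) (hx0 : V 0 ≠ x) (hxt : V t ≠ x)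
    (hfin : (crossingTimes V Vm x ∩ Ioc 0 t).Finite) :
    (incSet V x t).Finite ∧ (decSet V x t).Finite ∧
      (signedLocalTime V x t : ℝ) = netCrossing (V 0) (V t) x -
        ∑ᶠ s ∈ crossingTimes V Vm x ∩ Ioc 0 t, netCrossing (Vm s) (V s) x := by
  classical
  have hinc : incSet V x t = ↑(hfin.toFinset.filter (IncreasesThrough V x)) := by
    ext s
    simp only [incSet, Finset.coe_filter, Finite.mem_toFinset, mem_inter_iff, mem_ofPred_eq]
    exact ⟨fun h => ⟨⟨Or.inl h.2.2.1, h.1⟩, h.2⟩, fun h => ⟨h.1.2, h.2⟩⟩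
  have hdec : decSet V x t = ↑(hfin.toFinset.filter (DecreasesThrough V x)) := by
    ext s
    simp only [decSet, Finset.coe_filter, Finite.mem_toFinset, mem_inter_iff, mem_ofPred_eq]
    exact ⟨fun h => ⟨⟨Or.inl (neg_inj.1 h.2.2.1), h.1⟩, h.2⟩, fun h => ⟨h.1.2, h.2⟩⟩
  refine ⟨hinc ▸ Finset.finite_toSet _, hdec ▸ Finset.finite_toSet _, ?_⟩
  rw [hV.netCrossing_eq_finsum le_rfl ht hjump hx0 hxt hfin,
    finsum_mem_eq_finite_toFinset_sum _ hfin, finsum_mem_eq_finite_toFinset_sum _ hfin,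
    signedLocalTime, hinc, hdec, ncard_coe_finset, ncard_coe_finset]
  simp only [crossingContribution, Finset.sum_add_distrib, Finset.sum_sub_distrib, Finset.sum_boole]
  push_cast
  ring

end IsCadlag

end Crossings

section LocalTime

theorem finsum_mem_eq_tsum_subtype {g : ℝ → ℝ} {A B : Set ℝ}
    (h : A ∩ Function.support g = B ∩ Function.support g) (hfin : (B ∩ Function.support g).Finite) :
    ∑ᶠ s ∈ A, g s = ∑' s : B, g s := by
  rw [← finsum_mem_inter_support, h, finsum_mem_inter_support, tsum_subtype,
    tsum_eq_finsum (by rwa [Function.HasFiniteSupport, support_indicator]), finsum_mem_def]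

theorem tsum_subtype_eq_of_subset {g : ℝ → ℝ} {A B : Set ℝ} (hBA : B ⊆ A)
    (h : ∀ s ∈ A, s ∉ B → g s = 0) : ∑' s : A, g s = ∑' s : B, g s := by
  rw [tsum_subtype, tsum_subtype]
  congr 1
  ext s
  by_cases hB : s ∈ B
  · simp [indicator_of_mem hB, indicator_of_mem (hBA hB)]
  · by_cases hA : s ∈ A
    · simp [indicator_of_notMem hB, indicator_of_mem hA, h s hA hB]
    · simp [indicator_of_notMem hB, indicator_of_notMem hA]

variable {V Vm : ℝ → ℝ} {a b t : ℝ}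

theorem crossingTimes_inter_support (x : ℝ) :
    crossingTimes V Vm x ∩ Ioc a b ∩ Function.support (fun s => netCrossing (Vm s) (V s) x) =
      jumpTimes V Vm a b ∩ Function.support (fun s => netCrossing (Vm s) (V s) x) := by
  ext s
  simp only [crossingTimes, jumpTimes, mem_inter_iff, mem_ofPred_eq, Function.mem_support]
  constructor
  · rintro ⟨⟨-, hs⟩, hne⟩
    exact ⟨⟨hs, fun h => hne (by rw [h, netCrossing_self])⟩, hne⟩
  · rintro ⟨⟨hs, -⟩, hne⟩
    exact ⟨⟨Or.inr hne, hs⟩, hne⟩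

theorem IsCadlag.ae_signedLocalTime_eq (hV : IsCadlag V Vm) (hbv : BoundedVariationOn V (Icc 0 t))
    (ht : 0 ≤ t) :
    ∀ᵐ x, (incSet V x t).Finite ∧ (decSet V x t).Finite ∧
      (signedLocalTime V x t : ℝ) = netCrossing (V 0) (V t) x -
        ∑' s : jumpTimes V Vm 0 t, netCrossing (Vm s) (V s) x := by
  have hll : ∀ s ∈ Ioc 0 t, Tendsto V (𝓝[<] s) (𝓝 (Vm s)) :=
    fun s hs => hV.tendsto_leftLim s hs.1
  have hJ := countable_jumpTimes hbv hll
  have := hJ.to_subtype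
  have hbad : ∀ᵐ x, x ∉ {V 0, V t} ∪ V '' jumpTimes V Vm 0 t ∪ Vm '' jumpTimes V Vm 0 t :=
    measure_eq_zero_iff_ae_notMem.1 <|
      ((((countable_singleton _).insert _).union (hJ.image V)).union (hJ.image Vm)).measure_zero _
  filter_upwards [ae_finite_setOf_eq_of_boundedVariationOn hbv,
    ae_finite_setOf_netCrossing_ne_zero (u := fun s : jumpTimes V Vm 0 t => Vm s)
      (v := fun s => V s) (tsum_edist_jumpTimes_ne_top hbv hll), hbad] with x hlevel hjumps hx
  have hjump : ∀ s ∈ Ioc 0 t, Vm s ≠ V s → V s ≠ x ∧ Vm s ≠ x := fun s hs hj =>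
    ⟨fun h => hx (Or.inl (Or.inr ⟨s, ⟨hs, hj⟩, h⟩)), fun h => hx (Or.inr ⟨s, ⟨hs, hj⟩, h⟩)⟩
  have hjumps' :
      (jumpTimes V Vm 0 t ∩ Function.support fun s => netCrossing (Vm s) (V s) x).Finite :=
    (hjumps.image Subtype.val).subset fun s hs => ⟨⟨s, hs.1⟩, hs.2, rfl⟩
  have hfin : (crossingTimes V Vm x ∩ Ioc 0 t).Finite := by
    refine (hlevel.union hjumps').subset fun s hs => ?_
    rcases hs.1 with hS | hS
    · exact Or.inl ⟨Ioc_subset_Icc_self hs.2, hS⟩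
    · exact Or.inr ((crossingTimes_inter_support x).subset ⟨hs, hS⟩)
  obtain ⟨hI, hD, heq⟩ := hV.signedLocalTime_eq ht hjump
    (fun h => hx (Or.inl (Or.inl (Or.inl h.symm)))) (fun h => hx (Or.inl (Or.inl (Or.inr h.symm))))
    hfin
  exact ⟨hI, hD, by rwa [← finsum_mem_eq_tsum_subtype (crossingTimes_inter_support x) hjumps']⟩

variable {f : ℝ → ℝ}

theorem integral_deriv_eq_sub_of_contDiff (hf : ContDiff ℝ 1 f) (u v : ℝ) :
    ∫ x in u..v, deriv f x = f v - f u :=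
  intervalIntegral.integral_deriv_eq_sub (fun y _ => hf.differentiable one_ne_zero y)
    ((hf.continuous_deriv le_rfl).intervalIntegrable u v)

theorem summable_abs_comp_sub_leftLim (hf : ContDiff ℝ 1 f) (hbv : BoundedVariationOn V (Icc a b))
    (hll : ∀ s ∈ Ioc a b, Tendsto V (𝓝[<] s) (𝓝 (Vm s))) :
    Summable fun s : Ioc a b => |f (V s) - f (Vm s)| := by
  set R := (eVariationOn V (Icc a b)).toReal
  obtain ⟨L, hL⟩ := hf.locallyLipschitz.locallyLipschitzOn.exists_lipschitzOnWith_of_compact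
    (isCompact_Icc (a := V a - R) (b := V a + R))
  refine Summable.of_nonneg_of_le (fun _ => abs_nonneg _) (fun s => ?_)
    ((summable_abs_sub_leftLim hbv hll).mul_left (L : ℝ))
  simpa only [Real.dist_eq] using hL.dist_le_mul _
    (apply_mem_Icc_of_boundedVariationOn hbv (Ioc_subset_Icc_self s.2)) _
    (leftLim_mem_Icc_of_boundedVariationOn hbv s.2 (hll s s.2))

theorem integrable_deriv_mul_tsum_netCrossing_jumpTimes (hf : ContDiff ℝ 1 f)
    (hbv : BoundedVariationOn V (Icc a b)) (hll : ∀ s ∈ Ioc a b, Tendsto V (𝓝[<] s) (𝓝 (Vm s))) :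
    Integrable fun x => deriv f x * ∑' s : jumpTimes V Vm a b, netCrossing (Vm s) (V s) x := by
  have := (countable_jumpTimes hbv hll).to_subtype
  exact integrable_mul_tsum_netCrossing (u := fun s : jumpTimes V Vm a b => Vm s)
    (v := fun s => V s) (hf.continuous_deriv le_rfl)
    (fun s => leftLim_mem_Icc_of_boundedVariationOn hbv s.2.1 (hll s s.2.1))
    (fun s => apply_mem_Icc_of_boundedVariationOn hbv (Ioc_subset_Icc_self s.2.1))
    (tsum_edist_jumpTimes_ne_top hbv hll)

theorem integral_deriv_mul_tsum_netCrossing_jumpTimes (hf : ContDiff ℝ 1 f)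
    (hbv : BoundedVariationOn V (Icc a b)) (hll : ∀ s ∈ Ioc a b, Tendsto V (𝓝[<] s) (𝓝 (Vm s))) :
    ∫ x, deriv f x * ∑' s : jumpTimes V Vm a b, netCrossing (Vm s) (V s) x =
      ∑' s : Ioc a b, (f (V s) - f (Vm s)) := by
  have := (countable_jumpTimes hbv hll).to_subtype
  rw [integral_mul_tsum_netCrossing (u := fun s : jumpTimes V Vm a b => Vm s) (v := fun s => V s)
    (hf.continuous_deriv le_rfl)
    (fun s => leftLim_mem_Icc_of_boundedVariationOn hbv s.2.1 (hll s s.2.1))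
    (fun s => apply_mem_Icc_of_boundedVariationOn hbv (Ioc_subset_Icc_self s.2.1))
    (tsum_edist_jumpTimes_ne_top hbv hll),
    tsum_congr fun s => integral_deriv_eq_sub_of_contDiff hf _ _,
    tsum_subtype_eq_of_subset (g := fun s => f (V s) - f (Vm s))
      (B := jumpTimes V Vm a b) fun s hs => hs.1]
  intro s hs hsJ
  rw [show Vm s = V s from not_not.1 fun h => hsJ ⟨hs, h⟩, sub_self]

end LocalTime

/-- second change-of-variables formula. Let `V` be càdlàg on `[0,∞)` with
finite variation on compacts and let `f` be of class `C¹`. Then for every `t > 0`,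
`f(V t) − f(V 0) = ∫_ℝ f'(x) ℓ^x(t) dx + Σ_{0<s≤t} (f(V s) − f(V s−))`,
where `ℓ^x(t)` is well defined for Lebesgue-almost every `x` and the sum is absolutely
convergent. -/
theorem change_of_variables_local_time
    (V Vm : ℝ → ℝ)
    (hV_rc : ∀ s ∈ Set.Ici (0 : ℝ), ContinuousWithinAt V (Set.Ici s) s)
    (hV_ll : ∀ s ∈ Set.Ioi (0 : ℝ),
      Filter.Tendsto V (nhdsWithin s (Set.Iio s)) (nhds (Vm s)))
    (hV_bv : ∀ T : ℝ, BoundedVariationOn V (Set.Icc 0 T))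
    (t : ℝ) (ht : 0 < t)
    (f : ℝ → ℝ) (hf : ContDiff ℝ 1 f) :
    (∀ᵐ x : ℝ ∂volume, (incSet V x t).Finite ∧ (decSet V x t).Finite) ∧
      Summable (fun s : Set.Ioc (0 : ℝ) t => |f (V s.1) - f (Vm s.1)|) ∧
      f (V t) - f (V 0) =
        (∫ x : ℝ, deriv f x * (signedLocalTime V x t : ℝ) ∂volume) +
          ∑' s : Set.Ioc (0 : ℝ) t, (f (V s.1) - f (Vm s.1)) := by
  have hV : IsCadlag V Vm := ⟨hV_rc, hV_ll⟩
  have hll : ∀ s ∈ Ioc 0 t, Tendsto V (𝓝[<] s) (𝓝 (Vm s)) := fun s hs => hV_ll s hs.1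
  have hφ : LocallyIntegrable (deriv f) := (hf.continuous_deriv le_rfl).locallyIntegrable
  have hgood := hV.ae_signedLocalTime_eq (hV_bv t) ht.le
  refine ⟨hgood.mono fun x hx => ⟨hx.1, hx.2.1⟩, summable_abs_comp_sub_leftLim hf (hV_bv t) hll, ?_⟩
  have hint : ∫ x, deriv f x * signedLocalTime V x t =
      (∫ x, deriv f x * netCrossing (V 0) (V t) x) -
        ∫ x, deriv f x * ∑' s : jumpTimes V Vm 0 t, netCrossing (Vm s) (V s) x := by
    rw [← integral_sub (integrable_mul_netCrossing hφ _ _)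
      (integrable_deriv_mul_tsum_netCrossing_jumpTimes hf (hV_bv t) hll)]
    exact integral_congr_ae (hgood.mono fun x hx => by dsimp only; rw [hx.2.2, mul_sub])
  rw [hint, integral_mul_netCrossing hφ, integral_deriv_eq_sub_of_contDiff hf,
    integral_deriv_mul_tsum_netCrossing_jumpTimes hf (hV_bv t) hll]
  ring
end
end

section
/- Let V : [0,∞) → ℝ be a right-continuous function with left limits, of finite variation on every compact interval. Let t > 0 and let x be a simple level for V with x ≠ V(0) and x ≠ V(t). Then 1_{(−∞,x)}(V(t)) = 1_{(−∞,x)}(V(0)) − ℓ^x(t) + Σ_{0<s≤t} ( 1_{(−∞,x)}(V(s)) − 1_{(−∞,x)}(V(s−)) ), where the sum has only finitely many nonzero terms. -/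
open MeasureTheory Set Filter
open scoped ENNReal NNReal

noncomputable section

/-- `x` is a *simple level* for `V` (with left limits `Vm`): the set
`{t > 0 : V(t−) < x < V(t) or V(t) < x < V(t−) or V(t) = x}` has no accumulation point in
`[0,∞)` (it is discrete), and no jump of `V` starts or ends at `x`. -/
def SimpleLevel (V Vm : ℝ → ℝ) (x : ℝ) : Prop :=
  (∀ a : ℝ, 0 ≤ a →
      ¬ AccPt a (Filter.principal
        {u : ℝ | 0 < u ∧ ((Vm u < x ∧ x < V u) ∨ (V u < x ∧ x < Vm u) ∨ V u = x)})) ∧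
  {u : ℝ | 0 < u ∧ V u ≠ Vm u ∧ (x = V u ∨ x = Vm u)} = ∅

/-! Off the level times, right continuity, left limits and the absence of jumps ending at `x`
make the side of `x` on which `V` lies locally constant, hence constant on every gap between
level times by connectedness. As the level times in `(0, t]` are finitely many, induction on them
reduces the formula to a single level time `u`. Either `V` jumps across `x` at `u`, and the
change of side is the jump term; or `V u = x`, `V` is continuous at `u`, and the side changes
exactly when `V` increases or decreases through `x` at `u`. -/

theorem Filter.Tendsto.eventually_lt_iff_lt {α β : Type*} [TopologicalSpace β] [LinearOrder β]
    [OrderClosedTopology β] {f : α → β} {l : Filter α} {c x : β} (hf : Tendsto f l (nhds c))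
    (hc : c ≠ x) : ∀ᶠ y in l, (f y < x ↔ c < x) := by
  rcases hc.lt_or_gt with h | h
  · filter_upwards [hf.eventually_lt_const h] with y hy using iff_of_true hy h
  · filter_upwards [hf.eventually_const_lt h] with y hy using iff_of_false hy.not_gt h.not_gt

theorem gt_iff_gt_of_lt_iff_lt {α : Type*} [LinearOrder α] {a b x : α} (ha : a ≠ x)
    (hb : b ≠ x) (h : a < x ↔ b < x) : x < a ↔ x < b := by
  rw [← not_iff_not, not_lt, not_lt, ha.le_iff_lt, hb.le_iff_lt, h]

theorem tsum_subtype_eq_finset_sum {α β : Type*} [AddCommMonoid α] [TopologicalSpace α]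
    {f : β → α} {A : Set β} {S : Finset β} (hSA : ∀ s ∈ S, s ∈ A)
    (hf : ∀ s ∈ A, s ∉ S → f s = 0) : ∑' s : A, f s = ∑ s ∈ S, f s := by
  rw [tsum_subtype, tsum_eq_sum fun s hs => indicator_apply_eq_zero.2 fun hsA => hf s hsA hs]
  exact Finset.sum_congr rfl fun s hs => indicator_of_mem (hSA s hs) _

structure IsCadlag_s9 (V Vm : ℝ → ℝ) : Prop where
  rightCont : ∀ s ∈ Ici (0 : ℝ), ContinuousWithinAt V (Ici s) s
  leftLim : ∀ s ∈ Ioi (0 : ℝ), Tendsto V (nhdsWithin s (Iio s)) (nhds (Vm s))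

theorem IsCadlag_s9.continuousAt {V Vm : ℝ → ℝ} (hV : IsCadlag_s9 V Vm) {u : ℝ} (hu : 0 < u)
    (h : Vm u = V u) : ContinuousAt V u := by
  refine continuousAt_iff_continuous_left_right.2 ⟨continuousWithinAt_Iio_iff_Iic.1 ?_,
    hV.rightCont u hu.le⟩
  simpa only [ContinuousWithinAt, h] using hV.leftLim u hu

/-- The set that `SimpleLevel` requires to be discrete. -/
def levelTimes (V Vm : ℝ → ℝ) (x : ℝ) : Set ℝ :=
  {u : ℝ | 0 < u ∧ ((Vm u < x ∧ x < V u) ∨ (V u < x ∧ x < Vm u) ∨ V u = x)}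

theorem incSet_subset_levelTimes (V Vm : ℝ → ℝ) (x t : ℝ) :
    incSet V x t ⊆ levelTimes V Vm x ∩ Ioc 0 t :=
  fun _ hs => ⟨⟨hs.1.1, Or.inr (Or.inr hs.2.2.1)⟩, hs.1⟩

theorem decSet_subset_levelTimes (V Vm : ℝ → ℝ) (x t : ℝ) :
    decSet V x t ⊆ levelTimes V Vm x ∩ Ioc 0 t :=
  fun _ hs => ⟨⟨hs.1.1, Or.inr (Or.inr (neg_injective hs.2.2.1))⟩, hs.1⟩

theorem IncreasesThrough.eventually_lt {V : ℝ → ℝ} {x u : ℝ} (h : IncreasesThrough V x u) :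
    ∀ᶠ s in nhdsWithin u (Iio u), V s < x := by
  obtain ⟨hu, hVu, -, ε, hε, hloc⟩ := h
  have h₁ := le_max_left (u - ε) 0
  have h₂ := le_max_right (u - ε) 0
  filter_upwards [Ioo_mem_nhdsLT (max_lt (sub_lt_self u hε) hu)] with s hs
  rw [← hVu]
  have hsu : |s - u| < ε := abs_lt.2 ⟨by linarith [hs.1], by linarith [hs.2]⟩
  exact (hloc s (h₂.trans hs.1.le) hsu).1 hs.2

theorem IncreasesThrough.eventually_gt {V : ℝ → ℝ} {x u : ℝ} (h : IncreasesThrough V x u) :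
    ∀ᶠ s in nhdsWithin u (Ioi u), x < V s := by
  obtain ⟨hu, hVu, -, ε, hε, hloc⟩ := h
  filter_upwards [Ioo_mem_nhdsGT (show u < u + ε by linarith)] with s hs
  rw [← hVu]
  have hsu : |s - u| < ε := abs_lt.2 ⟨by linarith [hs.1], by linarith [hs.2]⟩
  exact (hloc s (hu.le.trans hs.1.le) hsu).2 hs.1

theorem increasesThrough_iff_of_sides {V : ℝ → ℝ} {x a u b : ℝ} {p q : Prop} (ha : 0 ≤ a)
    (hau : a < u) (hub : u < b) (hVu : V u = x) (hc : ContinuousAt V u)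
    (hl : ∀ s ∈ Ioo a u, V s < x ↔ p) (hr : ∀ s ∈ Ioo u b, x < V s ↔ q) :
    IncreasesThrough V x u ↔ p ∧ q := by
  constructor
  · intro h
    obtain ⟨s₁, hs₁, h₁⟩ := (h.eventually_lt.and (Ioo_mem_nhdsLT hau)).exists
    obtain ⟨s₂, hs₂, h₂⟩ := (h.eventually_gt.and (Ioo_mem_nhdsGT hub)).exists
    exact ⟨(hl s₁ h₁).1 hs₁, (hr s₂ h₂).1 hs₂⟩
  · rintro ⟨hp, hq⟩
    refine ⟨ha.trans_lt hau, hVu, hc.continuousWithinAt, min (u - a) (b - u),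
      lt_min (by linarith) (by linarith), fun s _ hs => ?_⟩
    obtain ⟨hs₁, hs₂⟩ := abs_lt.1 hs
    have := min_le_left (u - a) (b - u)
    have := min_le_right (u - a) (b - u)
    rw [hVu]
    exact ⟨fun hsu => (hl s ⟨by linarith, hsu⟩).2 hp,
      fun hus => (hr s ⟨hus, by linarith⟩).2 hq⟩

open scoped Classical in
theorem ncard_incSet_eq_add {V : ℝ → ℝ} {x t' u t : ℝ} (hfin : (incSet V x t').Finite)
    (ht'u : t' < u) (hut : u ≤ t) (honly : ∀ s ∈ Ioc t' t, V s = x → s = u) :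
    ((incSet V x t).ncard : ℤ) =
      (incSet V x t').ncard + if IncreasesThrough V x u then 1 else 0 := by
  have hsplit : incSet V x t = incSet V x t' ∪ {s | s = u ∧ IncreasesThrough V x s} := by
    ext s
    constructor
    · rintro ⟨⟨hs0, hst⟩, hs⟩
      rcases le_or_gt s t' with hst' | hst'
      · exact Or.inl ⟨⟨hs0, hst'⟩, hs⟩
      · exact Or.inr ⟨honly s ⟨hst', hst⟩ hs.2.1, hs⟩
    · rintro (⟨⟨hs0, hst'⟩, hs⟩ | ⟨rfl, hs⟩)
      · exact ⟨⟨hs0, hst'.trans (ht'u.le.trans hut)⟩, hs⟩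
      · exact ⟨⟨hs.1, hut⟩, hs⟩
  by_cases h : IncreasesThrough V x u
  · have hu : {s | s = u ∧ IncreasesThrough V x s} = {u} := by ext; simp +contextual [h]
    rw [hsplit, hu, union_singleton, ncard_insert_of_notMem (fun hu => hu.1.2.not_gt ht'u) hfin,
      if_pos h, Nat.cast_add_one]
  · have hu : {s | s = u ∧ IncreasesThrough V x s} = ∅ := by ext; simp +contextual [h]
    rw [hsplit, hu, union_empty, if_neg h, add_zero]

namespace SimpleLevel

variable {V Vm : ℝ → ℝ} {x : ℝ}

theorem finite_levelTimes_inter_Ioc (hx : SimpleLevel V Vm x) (T : ℝ) :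
    (levelTimes V Vm x ∩ Ioc 0 T).Finite := by
  by_contra hinf
  obtain ⟨a, ha, hacc⟩ := Set.Infinite.exists_accPt_of_subset_isCompact hinf isCompact_Icc
    (fun _ hs => Ioc_subset_Icc_self hs.2)
  exact hx.1 a ha.1 (hacc.mono (principal_mono.2 inter_subset_left))

theorem apply_eq_iff (hx : SimpleLevel V Vm x) {u : ℝ} (hu : 0 < u) : V u = x ↔ Vm u = x := by
  have h := Set.eq_empty_iff_forall_notMem.1 hx.2 u
  simp only [mem_ofPred_eq, not_and, not_or] at h
  constructor <;> intro he <;> by_contra hne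
  · exact (h hu (by rw [he]; exact Ne.symm hne)).1 he.symm
  · exact (h hu (by rw [he]; exact hne)).2 he.symm

theorem lt_iff_of_notMem (hx : SimpleLevel V Vm x) {u : ℝ} (hu : 0 < u)
    (h : u ∉ levelTimes V Vm x) : V u ≠ x ∧ Vm u ≠ x ∧ (V u < x ↔ Vm u < x) := by
  simp only [levelTimes, mem_ofPred_eq, not_and, not_or] at h
  obtain ⟨h₁, h₂, hVu⟩ := h hu
  have hVmu : Vm u ≠ x := fun he => hVu ((hx.apply_eq_iff hu).2 he)
  refine ⟨hVu, hVmu, ?_⟩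
  grind

open scoped Classical in
theorem signedLocalTime_eq_add (hx : SimpleLevel V Vm x) {t' u t : ℝ} (ht' : 0 ≤ t')
    (ht'u : t' < u) (hut : u ≤ t) (hL : levelTimes V Vm x ∩ Ioc t' t ⊆ {u}) :
    signedLocalTime V x t = signedLocalTime V x t' + (if IncreasesThrough V x u then 1 else 0)
      - (if DecreasesThrough V x u then 1 else 0) := by
  have hfin := hx.finite_levelTimes_inter_Ioc t'
  have honly : ∀ s ∈ Ioc t' t, V s = x → s = u := fun s hs hVs =>
    hL ⟨⟨ht'.trans_lt hs.1, Or.inr (Or.inr hVs)⟩, hs⟩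
  have hinc := ncard_incSet_eq_add (hfin.subset (incSet_subset_levelTimes V Vm x t')) ht'u hut
    honly
  have hdec : ((decSet V x t).ncard : ℤ) =
      (decSet V x t').ncard + if DecreasesThrough V x u then 1 else 0 :=
    ncard_incSet_eq_add (hfin.subset (decSet_subset_levelTimes V Vm x t')) ht'u hut
      fun s hs hVs => honly s hs (neg_injective hVs)
  rw [signedLocalTime, signedLocalTime, hinc, hdec]
  ring

end SimpleLevel

namespace IsCadlag_s9

variable {V Vm : ℝ → ℝ} {x a b : ℝ}

theorem lt_iff_lt_of_forall_notMem_s9 (hV : IsCadlag_s9 V Vm) (hx : SimpleLevel V Vm x) (ha : 0 ≤ a)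
    (hL : ∀ s ∈ Ioo a b, s ∉ levelTimes V Vm x) {s₁ s₂ : ℝ} (h₁ : s₁ ∈ Ioo a b)
    (h₂ : s₂ ∈ Ioo a b) : V s₁ < x ↔ V s₂ < x := by
  have hloc : ∀ s ∈ Ioo a b, ∀ᶠ y in nhds s, (V y < x ↔ V s < x) := by
    intro s hs
    have hs0 : 0 < s := ha.trans_lt hs.1
    obtain ⟨hVs, hVms, hside⟩ := hx.lt_iff_of_notMem hs0 (hL s hs)
    rw [← nhdsLT_sup_nhdsGE, eventually_sup, hside]
    exact ⟨(hV.leftLim s hs0).eventually_lt_iff_lt hVms,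
      by simpa only [hside] using (hV.rightCont s hs0.le).eventually_lt_iff_lt hVs⟩
  have hcont : ContinuousOn (fun y => decide (V y < x)) (Ioo a b) := fun s hs => by
    refine ContinuousAt.continuousWithinAt ?_
    rw [ContinuousAt, nhds_discrete Bool, tendsto_pure]
    filter_upwards [hloc s hs] with y hy
    simp only [hy]
  simpa using isPreconnected_Ioo.constant hcont h₁ h₂

theorem lt_iff_lt_left (hV : IsCadlag_s9 V Vm) (hx : SimpleLevel V Vm x) (ha : 0 ≤ a) (hab : a < b)
    (hL : ∀ s ∈ Ioo a b, s ∉ levelTimes V Vm x) (hVa : V a ≠ x) {s : ℝ}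
    (hs : s ∈ Ioo a b) : V s < x ↔ V a < x := by
  have hright : Tendsto V (nhdsWithin a (Ioi a)) (nhds (V a)) :=
    (hV.rightCont a ha).mono_left (nhdsWithin_mono _ Ioi_subset_Ici_self)
  obtain ⟨y, hy, hyab⟩ := ((hright.eventually_lt_iff_lt hVa).and (Ioo_mem_nhdsGT hab)).exists
  exact (hV.lt_iff_lt_of_forall_notMem_s9 hx ha hL hs hyab).trans hy

theorem lt_iff_lt_right (hV : IsCadlag_s9 V Vm) (hx : SimpleLevel V Vm x) (ha : 0 ≤ a) (hab : a < b)
    (hL : ∀ s ∈ Ioo a b, s ∉ levelTimes V Vm x) (hVmb : Vm b ≠ x) {s : ℝ}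
    (hs : s ∈ Ioo a b) : V s < x ↔ Vm b < x := by
  obtain ⟨y, hy, hyab⟩ := (((hV.leftLim b (ha.trans_lt hab)).eventually_lt_iff_lt hVmb).and
    (Ioo_mem_nhdsLT hab)).exists
  exact (hV.lt_iff_lt_of_forall_notMem_s9 hx ha hL hs hyab).trans hy

theorem leftLim_lt_iff_s9 (hV : IsCadlag_s9 V Vm) (hx : SimpleLevel V Vm x) (ha : 0 ≤ a) (hab : a < b)
    (hL : ∀ s ∈ Ioo a b, s ∉ levelTimes V Vm x) (hVa : V a ≠ x) (hVmb : Vm b ≠ x) :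
    Vm b < x ↔ V a < x := by
  obtain ⟨s, hs⟩ := nonempty_Ioo.2 hab
  exact (hV.lt_iff_lt_right hx ha hab hL hVmb hs).symm.trans (hV.lt_iff_lt_left hx ha hab hL hVa hs)

end IsCadlag_s9

theorem IsCadlag_s9.passageThrough_iff {V Vm : ℝ → ℝ} {x t' u t : ℝ} (hV : IsCadlag_s9 V Vm)
    (hx : SimpleLevel V Vm x) (ht' : 0 ≤ t') (ht'u : t' < u) (hut : u < t) (hVt' : V t' ≠ x)
    (hVt : V t ≠ x) (hVu : V u = x) (hL : levelTimes V Vm x ∩ Ioc t' t ⊆ {u}) :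
    (IncreasesThrough V x u ↔ V t' < x ∧ x < V t) ∧
      (DecreasesThrough V x u ↔ x < V t' ∧ V t < x) := by
  have hu : 0 < u := ht'.trans_lt ht'u
  have hnotL : ∀ s ∈ Ioc t' t, s ≠ u → s ∉ levelTimes V Vm x := fun s hs hsu hsL =>
    hsu (hL ⟨hsL, hs⟩)
  have hne : ∀ s ∈ Ioc t' t, s ≠ u → V s ≠ x := fun s hs hsu hVs =>
    hnotL s hs hsu ⟨ht'.trans_lt hs.1, Or.inr (Or.inr hVs)⟩
  obtain ⟨-, hVmt, hVt_iff⟩ :=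
    hx.lt_iff_of_notMem (hu.trans hut) (hnotL t ⟨ht'u.trans hut, le_rfl⟩ hut.ne')
  have hleft : ∀ s ∈ Ioo t' u, V s < x ↔ V t' < x := fun s hs =>
    hV.lt_iff_lt_left hx ht' ht'u (fun s hs => hnotL s ⟨hs.1, hs.2.le.trans hut.le⟩ hs.2.ne)
      hVt' hs
  have hright : ∀ s ∈ Ioo u t, V s < x ↔ V t < x := fun s hs =>
    (hV.lt_iff_lt_right hx hu.le hut (fun s hs => hnotL s ⟨ht'u.trans hs.1, hs.2.le⟩ hs.1.ne')
      hVmt hs).trans hVt_iff.symm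
  have hcont : ContinuousAt V u :=
    hV.continuousAt hu (((hx.apply_eq_iff hu).1 hVu).trans hVu.symm)
  have hleft' : ∀ s ∈ Ioo t' u, x < V s ↔ x < V t' := fun s hs =>
    gt_iff_gt_of_lt_iff_lt (hne s ⟨hs.1, hs.2.le.trans hut.le⟩ hs.2.ne) hVt' (hleft s hs)
  have hright' : ∀ s ∈ Ioo u t, x < V s ↔ x < V t := fun s hs =>
    gt_iff_gt_of_lt_iff_lt (hne s ⟨ht'u.trans hs.1, hs.2.le⟩ hs.1.ne') hVt (hright s hs)
  exact ⟨increasesThrough_iff_of_sides ht' ht'u hut hVu hcont hleft hright',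
    increasesThrough_iff_of_sides (V := fun s => -V s) ht' ht'u hut (by rw [hVu]) hcont.neg
      (fun s hs => neg_lt_neg_iff.trans (hleft' s hs))
      (fun s hs => neg_lt_neg_iff.trans (hright s hs))⟩

open scoped Classical in
theorem IsCadlag_s9.indicator_eq_add_of_levelTimes_subset {V Vm : ℝ → ℝ} {x t' u t : ℝ}
    (hV : IsCadlag_s9 V Vm) (hx : SimpleLevel V Vm x) (ht' : 0 ≤ t') (ht'u : t' < u) (hut : u ≤ t)
    (hVt' : V t' ≠ x) (hVt : V t ≠ x) (hL : levelTimes V Vm x ∩ Ioc t' t ⊆ {u}) :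
    (Iio x).indicator (fun _ => (1 : ℝ)) (V t) = (Iio x).indicator (fun _ => (1 : ℝ)) (V t') +
      ((Iio x).indicator (fun _ => (1 : ℝ)) (V u) -
        (Iio x).indicator (fun _ => (1 : ℝ)) (Vm u)) -
      (if IncreasesThrough V x u then 1 else 0) + (if DecreasesThrough V x u then 1 else 0) := by
  have hu : 0 < u := ht'.trans_lt ht'u
  by_cases hVu : V u = x
  · have hut' : u < t := hut.lt_of_ne (by rintro rfl; exact hVt hVu)
    obtain ⟨hinc, hdec⟩ := hV.passageThrough_iff hx ht' ht'u hut' hVt' hVt hVu hL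
    rw [hVu, (hx.apply_eq_iff hu).1 hVu, sub_self, add_zero]
    simp only [indicator_apply, mem_Iio, hinc, hdec]
    rcases lt_or_gt_of_ne hVt' with h₁ | h₁ <;> rcases lt_or_gt_of_ne hVt with h₂ | h₂ <;>
      simp [h₁, h₂, h₁.not_gt, h₂.not_gt]
  · have hninc : ¬IncreasesThrough V x u := fun h => hVu h.2.1
    have hndec : ¬DecreasesThrough V x u := fun h => hVu (neg_injective h.2.1)
    have hVmu : Vm u ≠ x := fun h => hVu ((hx.apply_eq_iff hu).2 h)
    have hleft : Vm u < x ↔ V t' < x := hV.leftLim_lt_iff_s9 hx ht' ht'u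
      (fun s hs hsL => hs.2.ne (hL ⟨hsL, hs.1, hs.2.le.trans hut⟩)) hVt' hVmu
    have hright : V t < x ↔ V u < x := by
      rcases hut.eq_or_lt with rfl | hut'
      · rfl
      obtain ⟨-, hVmt, hVt_iff⟩ := hx.lt_iff_of_notMem (hu.trans hut') fun htL =>
        hut'.ne' (hL ⟨htL, ht'u.trans hut', le_rfl⟩)
      exact hVt_iff.trans (hV.leftLim_lt_iff_s9 hx hu.le hut'
        (fun s hs hsL => hs.1.ne' (hL ⟨hsL, ht'u.trans hs.1, hs.2.le⟩)) hVu hVmt)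
    simp only [indicator_apply, mem_Iio, hleft, hright, if_neg hninc, if_neg hndec]
    ring

theorem SimpleLevel.exists_cut_before_max {V Vm : ℝ → ℝ} {x t u : ℝ} {S : Finset ℝ}
    (hx : SimpleLevel V Vm x) (hS : levelTimes V Vm x ∩ Ioc 0 t = ↑(insert u S))
    (hlt : ∀ s ∈ S, s < u) :
    ∃ t', 0 < t' ∧ t' < u ∧ V t' ≠ x ∧ levelTimes V Vm x ∩ Ioc 0 t' = S ∧
      levelTimes V Vm x ∩ Ioc t' t ⊆ {u} := by
  have hmem : ∀ s ∈ levelTimes V Vm x ∩ Ioc 0 t, s = u ∨ s ∈ S := fun s hs => by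
    simpa [hS] using hs
  have huL : u ∈ levelTimes V Vm x ∩ Ioc 0 t := by simp [hS]
  obtain ⟨t', hbelow, habove⟩ := Finset.exists_between (Finset.insert_nonempty 0 S)
    (Finset.singleton_nonempty u) fun s hs y hy => (Finset.mem_singleton.1 hy).symm ▸
      (Finset.mem_insert.1 hs).elim (· ▸ huL.2.1) (hlt s)
  have ht'u : t' < u := habove u (Finset.mem_singleton_self u)
  have ht'0 : 0 < t' := hbelow 0 (Finset.mem_insert_self 0 S)
  have hSt' : ∀ s ∈ S, s < t' := fun s hs => hbelow s (Finset.mem_insert_of_mem hs)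
  refine ⟨t', ht'0, ht'u, (hx.lt_iff_of_notMem ht'0 fun ht'L => ?_).1, ?_, fun s hs => ?_⟩
  · rcases hmem t' ⟨ht'L, ht'0, ht'u.le.trans huL.2.2⟩ with h | h
    exacts [ht'u.ne h, (hSt' t' h).false]
  · ext s
    refine ⟨fun hs => ?_, fun hs => ?_⟩
    · exact (hmem s ⟨hs.1, hs.2.1, hs.2.2.trans (ht'u.le.trans huL.2.2)⟩).resolve_left
        (hs.2.2.trans_lt ht'u).ne
    · have hst : s ∈ levelTimes V Vm x ∩ Ioc 0 t := by simp [hS, hs]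
      exact ⟨hst.1, hst.2.1, (hSt' s hs).le⟩
  · exact (hmem s ⟨hs.1, ht'0.trans hs.2.1, hs.2.2⟩).resolve_right fun hsS =>
      (hSt' s hsS).not_gt hs.2.1

theorem IsCadlag_s9.indicator_eq_sub_add_sum_of_levelTimes_eq {V Vm : ℝ → ℝ} {x : ℝ}
    (hV : IsCadlag_s9 V Vm) (hx : SimpleLevel V Vm x) (hx0 : V 0 ≠ x) (S : Finset ℝ) {t : ℝ}
    (ht : 0 < t) (hVt : V t ≠ x) (hS : levelTimes V Vm x ∩ Ioc 0 t = S) :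
    (Iio x).indicator (fun _ => (1 : ℝ)) (V t) =
      (Iio x).indicator (fun _ => (1 : ℝ)) (V 0) - (signedLocalTime V x t : ℝ) +
        ∑ s ∈ S, ((Iio x).indicator (fun _ => (1 : ℝ)) (V s) -
          (Iio x).indicator (fun _ => (1 : ℝ)) (Vm s)) := by
  induction S using Finset.induction_on_max generalizing t with
  | empty =>
    have hnot : ∀ s ∈ Ioc 0 t, s ∉ levelTimes V Vm x := fun s hs hsL => by
      simpa using hS.subset ⟨hsL, hs⟩
    obtain ⟨-, hVmt, hVt_iff⟩ := hx.lt_iff_of_notMem ht (hnot t ⟨ht, le_rfl⟩)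
    have hVt0 := hVt_iff.trans
      (hV.leftLim_lt_iff_s9 hx le_rfl ht (fun s hs => hnot s ⟨hs.1, hs.2.le⟩) hx0 hVmt)
    have hinc : incSet V x t = ∅ := by simpa [hS] using incSet_subset_levelTimes V Vm x t
    have hdec : decSet V x t = ∅ := by simpa [hS] using decSet_subset_levelTimes V Vm x t
    simp [signedLocalTime, hinc, hdec, indicator_apply, hVt0]
  | insert u S' hlt IH =>
    have hut : u ≤ t := (hS.symm.subset (Finset.mem_coe.2 (Finset.mem_insert_self u S'))).2.2
    obtain ⟨t', ht'0, ht'u, hVt', hS', hL⟩ := hx.exists_cut_before_max hS hlt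
    rw [hV.indicator_eq_add_of_levelTimes_subset hx ht'0.le ht'u hut hVt' hVt hL,
      hx.signedLocalTime_eq_add ht'0.le ht'u hut hL,
      Finset.sum_insert fun h => (hlt u h).false, IH ht'0 hVt' hS']
    push_cast
    ring

theorem tanaka_formula_Iio_general
    (V Vm : ℝ → ℝ)
    (hV_rc : ∀ s ∈ Set.Ici (0 : ℝ), ContinuousWithinAt V (Set.Ici s) s)
    (hV_ll : ∀ s ∈ Set.Ioi (0 : ℝ),
      Filter.Tendsto V (nhdsWithin s (Set.Iio s)) (nhds (Vm s)))
    (t : ℝ) (ht : 0 < t)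
    (x : ℝ) (hx : SimpleLevel V Vm x) (hx0 : x ≠ V 0) (hxt : x ≠ V t) :
    {s : ℝ | s ∈ Set.Ioc (0 : ℝ) t ∧
        (Set.Iio x).indicator (fun _ => (1 : ℝ)) (V s) ≠
          (Set.Iio x).indicator (fun _ => (1 : ℝ)) (Vm s)}.Finite ∧
      (Set.Iio x).indicator (fun _ => (1 : ℝ)) (V t) =
        (Set.Iio x).indicator (fun _ => (1 : ℝ)) (V 0) - (signedLocalTime V x t : ℝ) +
          ∑' s : Set.Ioc (0 : ℝ) t,
            ((Set.Iio x).indicator (fun _ => (1 : ℝ)) (V s.1) -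
              (Set.Iio x).indicator (fun _ => (1 : ℝ)) (Vm s.1)) := by
  have hfin := hx.finite_levelTimes_inter_Ioc t
  have hjump : ∀ s ∈ Ioc 0 t, s ∉ levelTimes V Vm x →
      (Iio x).indicator (fun _ => (1 : ℝ)) (V s) =
        (Iio x).indicator (fun _ => (1 : ℝ)) (Vm s) :=
    fun s hs hsL => by simp only [indicator_apply, mem_Iio, (hx.lt_iff_of_notMem hs.1 hsL).2.2]
  refine ⟨hfin.subset fun s hs => ⟨by_contra fun hsL => hs.2 (hjump s hs.1 hsL), hs.1⟩, ?_⟩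
  rw [IsCadlag_s9.indicator_eq_sub_add_sum_of_levelTimes_eq ⟨hV_rc, hV_ll⟩ hx hx0.symm
    hfin.toFinset ht hxt.symm hfin.coe_toFinset.symm]
  refine congrArg _ (tsum_subtype_eq_finset_sum (fun s hs => (hfin.mem_toFinset.1 hs).2) ?_).symm
  intro s hs hsS
  exact sub_eq_zero.2 (hjump s hs fun hsL => hsS (hfin.mem_toFinset.2 ⟨hsL, hs⟩))

/-- Meyer–Tanaka formula, lower-indicator version. Let `V` be càdlàg on
`[0,∞)` with finite variation on compacts, `t > 0`, and let `x` be a simple level for `V`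
with `x ≠ V 0` and `x ≠ V t`. Then
`1_{(−∞,x)}(V t) = 1_{(−∞,x)}(V 0) − ℓ^x(t) + Σ_{0<s≤t} (1_{(−∞,x)}(V s) − 1_{(−∞,x)}(V s−))`,
the sum having only finitely many nonzero terms. -/
theorem tanaka_formula_Iio
    (V Vm : ℝ → ℝ)
    (hV_rc : ∀ s ∈ Set.Ici (0 : ℝ), ContinuousWithinAt V (Set.Ici s) s)
    (hV_ll : ∀ s ∈ Set.Ioi (0 : ℝ),
      Filter.Tendsto V (nhdsWithin s (Set.Iio s)) (nhds (Vm s)))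
    (hV_bv : ∀ T : ℝ, BoundedVariationOn V (Set.Icc 0 T))
    (t : ℝ) (ht : 0 < t)
    (x : ℝ) (hx : SimpleLevel V Vm x) (hx0 : x ≠ V 0) (hxt : x ≠ V t) :
    {s : ℝ | s ∈ Set.Ioc (0 : ℝ) t ∧
        (Set.Iio x).indicator (fun _ => (1 : ℝ)) (V s) ≠
          (Set.Iio x).indicator (fun _ => (1 : ℝ)) (Vm s)}.Finite ∧
      (Set.Iio x).indicator (fun _ => (1 : ℝ)) (V t) =
        (Set.Iio x).indicator (fun _ => (1 : ℝ)) (V 0) - (signedLocalTime V x t : ℝ) +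
          ∑' s : Set.Ioc (0 : ℝ) t,
            ((Set.Iio x).indicator (fun _ => (1 : ℝ)) (V s.1) -
              (Set.Iio x).indicator (fun _ => (1 : ℝ)) (Vm s.1)) :=
  tanaka_formula_Iio_general V Vm hV_rc hV_ll t ht x hx hx0 hxt
end
end
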